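/- Assume the orthogonality condition Q·Q̃ᵀ = 0. Then P·B₀·Pᵀ is the block matrix whose only nonzero blocks are: −Q·Qᵀ in the (η,η̃) and (η̃,η) positions, −Q̃·Q̃ᵀ in the (φ,φ) position, +Q̃·Q̃ᵀ in the (δ,δ) position, and I_N in the (ω,ω) position; all other blocks vanish. In particular the pairing of the δ-directions is the negative of that of the φ-directions, the ω-directions have identity pairing, and the η-directions are null and pair only with the η̃-directions. (The block structure of the transformed bilinear form, eq. (3.18) and the surrounding claims of Section 3.2.1.) -/

import Mathlib

open Matrix

set_option maxHeartbeats 1000000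

/-- The block structure of the transformed bilinear form (eq. (3.18)): with `A`
invertible, `Q` its first `k` rows, `Q̃` its last `N - k` rows, `Q · Q̃ᵀ = 0`,
`F := A⁻¹ B` (with `B` equal to `A` on the first `k` rows and zero below), `B₀` the
diagonal form `diag(−1_N, 1_N, 1_N)` on the `(σ, ρ, γ)` directions and `P` the change of
basis with row blocks `(Q,0,Q), (Q,−Q,0), (Q̃,0,0), (0,−Q̃,0), (Fᵀ,−Fᵀ,1)` (the `η, η̃,
φ, δ, ω` rows), the matrix `P · B₀ · Pᵀ` has nonzero blocks only `−Q Qᵀ` in the `(η,η̃)`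
and `(η̃,η)` slots, `−Q̃ Q̃ᵀ` in the `(φ,φ)` slot, `Q̃ Q̃ᵀ` in the `(δ,δ)` slot and the
identity in the `(ω,ω)` slot. -/
theorem transformed_bilinear_form_block_structure (K : Type*) [Field K] (N k : ℕ) (hk : k ≤ N)
    (A : Matrix (Fin N) (Fin N) K) (hA : IsUnit A) :
    let Q : Matrix (Fin k) (Fin N) K := A.submatrix (Fin.castLE hk) id
    let Qt : Matrix (Fin (N - k)) (Fin N) K :=
      A.submatrix (fun a : Fin (N - k) => (⟨k + (a : ℕ), by omega⟩ : Fin N)) id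
    let B : Matrix (Fin N) (Fin N) K := Matrix.of fun i j => if (i : ℕ) < k then A i j else 0
    let F : Matrix (Fin N) (Fin N) K := A⁻¹ * B
    Q * Qtᵀ = 0 →
    let P : Matrix (Fin k ⊕ (Fin k ⊕ (Fin (N - k) ⊕ (Fin (N - k) ⊕ Fin N))))
        (Fin N ⊕ (Fin N ⊕ Fin N)) K :=
      Matrix.of (Sum.elim
        (fun a => Sum.elim (Q a) (Sum.elim (fun _ => 0) (Q a)))
        (Sum.elim
          (fun a => Sum.elim (Q a) (Sum.elim (fun s => -(Q a s)) (fun _ => 0)))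
          (Sum.elim
            (fun a => Sum.elim (Qt a) (Sum.elim (fun _ => 0) (fun _ => 0)))
            (Sum.elim
              (fun a => Sum.elim (fun _ => 0) (Sum.elim (fun s => -(Qt a s)) (fun _ => 0)))
              (fun i => Sum.elim (fun s => F s i)
                (Sum.elim (fun s => -(F s i)) (fun s => if i = s then 1 else 0)))))))
    let B0 : Matrix (Fin N ⊕ (Fin N ⊕ Fin N)) (Fin N ⊕ (Fin N ⊕ Fin N)) K :=
      Matrix.fromBlocks (-1) 0 0 (Matrix.fromBlocks 1 0 0 1)
    P * B0 * Pᵀ = Matrix.of (fun i j =>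
      match i, j with
      | Sum.inl a, Sum.inr (Sum.inl b) => -((Q * Qᵀ) a b)
      | Sum.inr (Sum.inl a), Sum.inl b => -((Q * Qᵀ) a b)
      | Sum.inr (Sum.inr (Sum.inl a)), Sum.inr (Sum.inr (Sum.inl b)) => -((Qt * Qtᵀ) a b)
      | Sum.inr (Sum.inr (Sum.inr (Sum.inl a))), Sum.inr (Sum.inr (Sum.inr (Sum.inl b))) =>
          (Qt * Qtᵀ) a b
      | Sum.inr (Sum.inr (Sum.inr (Sum.inr a))), Sum.inr (Sum.inr (Sum.inr (Sum.inr b))) =>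
          if a = b then 1 else 0
      | _, _ => 0) := by

  intro Q Qt B F hQQt P B0
  have hdet : IsUnit A.det := (Matrix.isUnit_iff_isUnit_det A).mp hA
  have hAF : A * F = B := Matrix.mul_nonsing_inv_cancel_left A B hdet
  have h1 : ∀ (a : Fin k) (j : Fin N), ∑ s, Q a s * F s j = Q a j := by
    intro a j
    have h := congrFun (congrFun hAF (Fin.castLE hk a)) j
    simp only [Matrix.mul_apply] at h
    have hlt : ((Fin.castLE hk a : Fin N) : ℕ) < k := by simp [a.isLt]
    simpa [B, Q, Matrix.submatrix_apply, hlt] using h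
  have h2 : ∀ (a : Fin (N - k)) (j : Fin N), ∑ s, Qt a s * F s j = 0 := by
    intro a j
    have h := congrFun (congrFun hAF (⟨k + (a : ℕ), by omega⟩ : Fin N)) j
    simp only [Matrix.mul_apply] at h
    simpa [B, Qt, Matrix.submatrix_apply] using h
  have h3 : ∀ (a : Fin k) (b : Fin (N - k)), ∑ s, Q a s * Qt b s = 0 := by
    intro a b
    have h := congrFun (congrFun hQQt a) b
    simpa [Matrix.mul_apply, Matrix.transpose_apply] using h
  have h1' : ∀ (a : Fin k) (j : Fin N), ∑ s, F s j * Q a s = Q a j := by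
    intro a j; rw [← h1 a j]; exact Finset.sum_congr rfl fun s _ => mul_comm _ _
  have h2' : ∀ (a : Fin (N - k)) (j : Fin N), ∑ s, F s j * Qt a s = 0 := by
    intro a j; rw [← h2 a j]; exact Finset.sum_congr rfl fun s _ => mul_comm _ _
  have h3' : ∀ (a : Fin k) (b : Fin (N - k)), ∑ s, Qt b s * Q a s = 0 := by
    intro a b; rw [← h3 a b]; exact Finset.sum_congr rfl fun s _ => mul_comm _ _
  have aux_block : ∀ (N k m : ℕ)
      (Q : Matrix (Fin k) (Fin N) K) (Qt : Matrix (Fin m) (Fin N) K)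
      (F : Matrix (Fin N) (Fin N) K)
      (h1 : ∀ (a : Fin k) (j : Fin N), ∑ s, Q a s * F s j = Q a j)
      (h1' : ∀ (a : Fin k) (j : Fin N), ∑ s, F s j * Q a s = Q a j)
      (h2 : ∀ (a : Fin m) (j : Fin N), ∑ s, Qt a s * F s j = 0)
      (h2' : ∀ (a : Fin m) (j : Fin N), ∑ s, F s j * Qt a s = 0)
      (h3 : ∀ (a : Fin k) (b : Fin m), ∑ s, Q a s * Qt b s = 0)
      (h3' : ∀ (a : Fin k) (b : Fin m), ∑ s, Qt b s * Q a s = 0),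
      (Matrix.of (Sum.elim
          (fun a => Sum.elim (Q a) (Sum.elim (fun _ => 0) (Q a)))
          (Sum.elim
            (fun a => Sum.elim (Q a) (Sum.elim (fun s => -(Q a s)) (fun _ => 0)))
            (Sum.elim
              (fun a => Sum.elim (Qt a) (Sum.elim (fun _ => 0) (fun _ => 0)))
              (Sum.elim
                (fun a => Sum.elim (fun _ => 0) (Sum.elim (fun s => -(Qt a s)) (fun _ => 0)))
                (fun i => Sum.elim (fun s => F s i)
                  (Sum.elim (fun s => -(F s i)) (fun s => if i = s then 1 else 0))))))) :
          Matrix (Fin k ⊕ (Fin k ⊕ (Fin m ⊕ (Fin m ⊕ Fin N)))) (Fin N ⊕ (Fin N ⊕ Fin N)) K) *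
        (Matrix.fromBlocks (-1) 0 0 (Matrix.fromBlocks 1 0 0 1) :
          Matrix (Fin N ⊕ (Fin N ⊕ Fin N)) (Fin N ⊕ (Fin N ⊕ Fin N)) K) *
        (Matrix.of (Sum.elim
          (fun a => Sum.elim (Q a) (Sum.elim (fun _ => 0) (Q a)))
          (Sum.elim
            (fun a => Sum.elim (Q a) (Sum.elim (fun s => -(Q a s)) (fun _ => 0)))
            (Sum.elim
              (fun a => Sum.elim (Qt a) (Sum.elim (fun _ => 0) (fun _ => 0)))
              (Sum.elim
                (fun a => Sum.elim (fun _ => 0) (Sum.elim (fun s => -(Qt a s)) (fun _ => 0)))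
                (fun i => Sum.elim (fun s => F s i)
                  (Sum.elim (fun s => -(F s i)) (fun s => if i = s then 1 else 0))))))) :
          Matrix (Fin k ⊕ (Fin k ⊕ (Fin m ⊕ (Fin m ⊕ Fin N)))) (Fin N ⊕ (Fin N ⊕ Fin N)) K)ᵀ
      = Matrix.of (fun i j =>
        match i, j with
        | Sum.inl a, Sum.inr (Sum.inl b) => -((Q * Qᵀ) a b)
        | Sum.inr (Sum.inl a), Sum.inl b => -((Q * Qᵀ) a b)
        | Sum.inr (Sum.inr (Sum.inl a)), Sum.inr (Sum.inr (Sum.inl b)) => -((Qt * Qtᵀ) a b)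
        | Sum.inr (Sum.inr (Sum.inr (Sum.inl a))), Sum.inr (Sum.inr (Sum.inr (Sum.inl b))) =>
            (Qt * Qtᵀ) a b
        | Sum.inr (Sum.inr (Sum.inr (Sum.inr a))), Sum.inr (Sum.inr (Sum.inr (Sum.inr b))) =>
            if a = b then 1 else 0
        | _, _ => 0) := by
    intro N k m Q Qt F h1 h1' h2 h2' h3 h3'
    set P := (Matrix.of (Sum.elim
          (fun a => Sum.elim (Q a) (Sum.elim (fun _ => 0) (Q a)))
          (Sum.elim
            (fun a => Sum.elim (Q a) (Sum.elim (fun s => -(Q a s)) (fun _ => 0)))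
            (Sum.elim
              (fun a => Sum.elim (Qt a) (Sum.elim (fun _ => 0) (fun _ => 0)))
              (Sum.elim
                (fun a => Sum.elim (fun _ => 0) (Sum.elim (fun s => -(Qt a s)) (fun _ => 0)))
                (fun i => Sum.elim (fun s => F s i)
                  (Sum.elim (fun s => -(F s i)) (fun s => if i = s then 1 else 0))))))) :
          Matrix (Fin k ⊕ (Fin k ⊕ (Fin m ⊕ (Fin m ⊕ Fin N)))) (Fin N ⊕ (Fin N ⊕ Fin N)) K)
      with hP
    have hPB0 : P * (Matrix.fromBlocks (-1) 0 0 (Matrix.fromBlocks 1 0 0 1) :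
        Matrix (Fin N ⊕ (Fin N ⊕ Fin N)) (Fin N ⊕ (Fin N ⊕ Fin N)) K) =
        Matrix.of (fun i => Sum.elim (fun s => -(P i (Sum.inl s)))
          (Sum.elim (fun s => P i (Sum.inr (Sum.inl s))) (fun s => P i (Sum.inr (Sum.inr s))))) := by
      ext i t
      rcases t with s | s | s <;>
        simp [Matrix.mul_apply, Fintype.sum_sum_type, Matrix.one_apply, mul_ite,
          Finset.sum_ite_eq, Finset.sum_ite_eq']
    rw [hPB0]
    ext i j
    rcases i with a | a | a | a | a <;> rcases j with b | b | b | b | b <;>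
      simp [hP, Matrix.mul_apply, Fintype.sum_sum_type, Matrix.transpose_apply, mul_ite, ite_mul,
        Finset.sum_ite_eq, Finset.sum_ite_eq', neg_mul, mul_neg, neg_neg,
        Finset.sum_neg_distrib, h1, h1', h2, h2', h3, h3']
  show P * B0 * Pᵀ = _
  simp only [P, B0]
  ext i j
  have h := congrFun (congrFun (aux_block N k (N - k) Q Qt F h1 h1' h2 h2' h3 h3') i) j
  rcases i with a | a | a | a | a <;> rcases j with b | b | b | b | b <;> exact h
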